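/- arXiv:1710.05992 — 2 statements merged into one kernel-verified Lean document; each statement's English description precedes it below -/
import Mathlib

section
/- The set of power series of the form a(T) = T + ∑_{i≥1} a_i T^{2^i} over an 𝔽_2-algebra A forms a group under composition of power series. -/
noncomputable section

variable (A : Type*) [CommRing A]

/-- Composition `f(g(T))` of one-variable power series, for `g` with zero constant
term: the `n`-th coefficient is `∑_{k ≤ n} f_k · coeff n (g^k)`. -/
def psComp (f g : PowerSeries A) : PowerSeries A :=
  PowerSeries.mk fun n =>
    ∑ k ∈ Finset.range (n + 1), PowerSeries.coeff k f * PowerSeries.coeff n (g ^ k)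

/-- The predicate describing power series of the form `T + ∑_{i≥1} a_i T^{2^i}`:
the linear coefficient is `1` and all coefficients away from degrees `2^i` vanish. -/
def IsAdditiveSeries (f : PowerSeries A) : Prop :=
  PowerSeries.coeff 1 f = 1 ∧
    ∀ k : ℕ, (¬ ∃ i : ℕ, k = 2 ^ i) → PowerSeries.coeff k f = 0

/-!
In characteristic `p`, Frobenius gives `(∑ bᵢ X^{pⁱ})^{pʲ} = ∑ bᵢ^{pʲ} X^{p^{i+j}}`. Hence if `f`
is supported on the powers of `p`, the coefficient of `f ∘ g` in degree `pⁿ` is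
`∑ⱼ f_{pʲ} g_{p^{n-j}}^{pʲ}`, which involves only the coefficients of `g` in degrees that are
powers of `p`, and if `g` is supported on the powers of `p` too, then so is `f ∘ g`. Composition
agrees with `PowerSeries.subst`, which is associative and under which a series `f` with unit
linear coefficient has a two-sided inverse `g`. Projecting `g` onto the powers of `p` leaves
`f ∘ g` unchanged in the degrees `pⁿ`, so the projection is again a right inverse of `f`, and
thus it equals `g`.
-/

open PowerSeries

variable {A}

section Composition

lemma coeff_pow_eq_zero_of_lt {g : A⟦X⟧} (hg : constantCoeff g = 0) {n k : ℕ} (h : n < k) :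
    coeff n (g ^ k) = 0 :=
  coeff_of_lt_order n <|
    (le_order_pow_of_constantCoeff_eq_zero k hg).trans_lt' (by exact_mod_cast h)

lemma psComp_eq_subst (f : A⟦X⟧) {g : A⟦X⟧} (hg : constantCoeff g = 0) :
    psComp A f g = f.subst g := by
  ext n
  rw [psComp, coeff_mk, coeff_subst' (.of_constantCoeff_zero' hg),
    finsum_eq_sum_of_support_subset _ (s := Finset.range (n + 1)) ?_]
  · simp [smul_eq_mul]
  · intro k hk
    contrapose! hk
    simp [coeff_pow_eq_zero_of_lt hg (by simpa using hk)]

lemma psComp_assoc (f : A⟦X⟧) {g h : A⟦X⟧} (hg : constantCoeff g = 0)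
    (hh : constantCoeff h = 0) : psComp A (psComp A f g) h = psComp A f (psComp A g h) := by
  rw [psComp_eq_subst _ hh, psComp_eq_subst _ hg, psComp_eq_subst _ hh,
    psComp_eq_subst _ (constantCoeff_subst_eq_zero hh g hg),
    subst_comp_subst_apply (.of_constantCoeff_zero' hg) (.of_constantCoeff_zero' hh)]

lemma psComp_X (f : A⟦X⟧) : psComp A f X = f := by
  rw [psComp_eq_subst _ constantCoeff_X, X_subst]

lemma X_psComp {g : A⟦X⟧} (hg : constantCoeff g = 0) : psComp A X g = g := by
  rw [psComp_eq_subst _ hg, subst_X (.of_constantCoeff_zero' hg)]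

lemma psComp_substInvOfIsUnit {f : A⟦X⟧} (hf : constantCoeff f = 0) (hu : IsUnit (coeff 1 f)) :
    psComp A f (f.substInvOfIsUnit hu) = X := by
  rw [psComp_eq_subst _ (constantCoeff_substInvOfIsUnit f hu), subst_substInvOfIsUnit_right f hf]

lemma substInvOfIsUnit_psComp {f : A⟦X⟧} (hf : constantCoeff f = 0) (hu : IsUnit (coeff 1 f)) :
    psComp A (f.substInvOfIsUnit hu) f = X := by
  rw [psComp_eq_subst _ hf, subst_substInvOfIsUnit_left f hf]

end Composition

lemma coeff_pow_expChar_pow (p : ℕ) [ExpChar A p] (g : A⟦X⟧) (j n : ℕ) :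
    coeff n (g ^ p ^ j) = if p ^ j ∣ n then coeff (n / p ^ j) g ^ p ^ j else 0 := by
  have frob : g ^ p ^ j =
      map (iterateFrobenius A p j) (expand (p ^ j) (pow_ne_zero j (expChar_ne_zero A p)) g) :=
    (MvPowerSeries.map_iterateFrobenius_expand p (expChar_ne_zero A p) g j).symm
  rw [frob, coeff_map, coeff_expand, apply_ite (iterateFrobenius A p j), map_zero,
    iterateFrobenius_def]

def IsSupportedOnPowers (p : ℕ) (f : A⟦X⟧) : Prop :=
  ∀ k : ℕ, (¬ ∃ i : ℕ, k = p ^ i) → coeff k f = 0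

open Classical in
def powersPart (p : ℕ) (f : A⟦X⟧) : A⟦X⟧ :=
  mk fun k => if ∃ i : ℕ, k = p ^ i then coeff k f else 0

lemma isSupportedOnPowers_X (p : ℕ) : IsSupportedOnPowers p (X : A⟦X⟧) := by
  intro k hk
  rw [coeff_X, if_neg]
  rintro rfl
  exact hk ⟨0, (pow_zero p).symm⟩

lemma isSupportedOnPowers_powersPart (p : ℕ) (f : A⟦X⟧) :
    IsSupportedOnPowers p (powersPart p f) := by
  intro k hk
  rw [powersPart, coeff_mk, if_neg hk]

lemma coeff_pow_powersPart (p : ℕ) (f : A⟦X⟧) (n : ℕ) :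
    coeff (p ^ n) (powersPart p f) = coeff (p ^ n) f := by
  rw [powersPart, coeff_mk, if_pos ⟨n, rfl⟩]

namespace IsSupportedOnPowers

variable {p : ℕ} {f g : A⟦X⟧}

lemma constantCoeff_eq_zero (hp : p ≠ 0) (hf : IsSupportedOnPowers p f) :
    constantCoeff f = 0 := by
  rw [← coeff_zero_eq_constantCoeff_apply]
  exact hf 0 fun ⟨i, hi⟩ => pow_ne_zero i hp hi.symm

lemma ext (hf : IsSupportedOnPowers p f) (hg : IsSupportedOnPowers p g)
    (h : ∀ n, coeff (p ^ n) f = coeff (p ^ n) g) : f = g := by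
  ext k
  by_cases hk : ∃ i, k = p ^ i
  · obtain ⟨i, rfl⟩ := hk
    exact h i
  · rw [hf k hk, hg k hk]

end IsSupportedOnPowers

section Prime

variable {p : ℕ} [hp : Fact p.Prime] [CharP A p] {f g : A⟦X⟧}

lemma coeff_prime_pow_psComp (hf : IsSupportedOnPowers p f) (g : A⟦X⟧) (n : ℕ) :
    coeff (p ^ n) (psComp A f g) =
      ∑ j ∈ Finset.range (n + 1), coeff (p ^ j) f * coeff (p ^ (n - j)) g ^ p ^ j := by
  have hp1 : 1 < p := hp.out.one_lt
  let powers : ℕ ↪ ℕ := ⟨(p ^ ·), Nat.pow_right_injective hp.out.two_le⟩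
  rw [psComp, coeff_mk, ← Finset.sum_subset (s₁ := (Finset.range (n + 1)).map powers)]
  · rw [Finset.sum_map]
    refine Finset.sum_congr rfl fun j hj => ?_
    have hjn : j ≤ n := Finset.mem_range_succ_iff.mp hj
    simp only [powers, Function.Embedding.coeFn_mk]
    rw [coeff_pow_expChar_pow, if_pos (pow_dvd_pow p hjn), Nat.pow_div hjn hp.out.pos]
  · intro k hk
    simp only [Finset.mem_map, Finset.mem_range, powers, Function.Embedding.coeFn_mk] at hk ⊢
    obtain ⟨j, hj, rfl⟩ := hk
    exact Nat.lt_succ_of_le (Nat.pow_le_pow_right hp.out.pos (by omega))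
  · intro k hk hk'
    suffices ¬ ∃ j, k = p ^ j by rw [hf k this, zero_mul]
    rintro ⟨j, rfl⟩
    refine hk' (Finset.mem_map_of_mem powers (Finset.mem_range_succ_iff.mpr ?_))
    exact (Nat.pow_le_pow_iff_right hp1).mp (Finset.mem_range_succ_iff.mp hk)

lemma IsSupportedOnPowers.comp (hf : IsSupportedOnPowers p f) (hg : IsSupportedOnPowers p g) :
    IsSupportedOnPowers p (psComp A f g) := by
  intro m hm
  rw [psComp, coeff_mk]
  refine Finset.sum_eq_zero fun k _ => ?_
  by_cases hk : ∃ j, k = p ^ j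
  · obtain ⟨j, rfl⟩ := hk
    rw [coeff_pow_expChar_pow]
    split_ifs with hd
    · obtain ⟨c, rfl⟩ := hd
      have hc : ¬ ∃ i, c = p ^ i := fun ⟨i, hi⟩ => hm ⟨j + i, by rw [hi, pow_add]⟩
      rw [Nat.mul_div_cancel_left c (pow_pos hp.out.pos j), hg c hc,
        zero_pow (pow_ne_zero j hp.out.ne_zero), mul_zero]
    · rw [mul_zero]
  · rw [hf k hk, zero_mul]

lemma IsSupportedOnPowers.substInvOfIsUnit (hf : IsSupportedOnPowers p f)
    (hu : IsUnit (coeff 1 f)) : IsSupportedOnPowers p (f.substInvOfIsUnit hu) := by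
  set g := f.substInvOfIsUnit hu
  set h := powersPart p g
  have hf0 : constantCoeff f = 0 := hf.constantCoeff_eq_zero hp.out.ne_zero
  have hh : IsSupportedOnPowers p h := isSupportedOnPowers_powersPart p g
  have hh0 : constantCoeff h = 0 := hh.constantCoeff_eq_zero hp.out.ne_zero
  have hfh : psComp A f h = X := by
    refine (hf.comp hh).ext (isSupportedOnPowers_X p) fun n => ?_
    rw [← psComp_substInvOfIsUnit hf0 hu, coeff_prime_pow_psComp hf, coeff_prime_pow_psComp hf]
    simp only [h, g, coeff_pow_powersPart]
  have hgh : g = h := calc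
    g = psComp A g (psComp A f h) := by rw [hfh, psComp_X]
    _ = psComp A (psComp A g f) h := (psComp_assoc g hf0 hh0).symm
    _ = h := by rw [substInvOfIsUnit_psComp hf0 hu, X_psComp hh0]
  rw [hgh]
  exact hh

end Prime

lemma isAdditiveSeries_X : IsAdditiveSeries A X :=
  ⟨coeff_one_X, isSupportedOnPowers_X 2⟩

namespace IsAdditiveSeries

variable {f g : A⟦X⟧}

lemma isSupportedOnPowers (hf : IsAdditiveSeries A f) : IsSupportedOnPowers 2 f :=
  hf.2

lemma constantCoeff_eq_zero (hf : IsAdditiveSeries A f) : constantCoeff f = 0 :=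
  hf.isSupportedOnPowers.constantCoeff_eq_zero two_ne_zero

lemma isUnit_coeff_one (hf : IsAdditiveSeries A f) : IsUnit (coeff 1 f) :=
  hf.1 ▸ isUnit_one

variable [CharP A 2]

lemma comp (hf : IsAdditiveSeries A f) (hg : IsAdditiveSeries A g) :
    IsAdditiveSeries A (psComp A f g) := by
  refine ⟨?_, hf.isSupportedOnPowers.comp hg.isSupportedOnPowers⟩
  simpa [hf.1, hg.1] using coeff_prime_pow_psComp hf.isSupportedOnPowers g 0

lemma substInvOfIsUnit (hf : IsAdditiveSeries A f) :
    IsAdditiveSeries A (f.substInvOfIsUnit hf.isUnit_coeff_one) := by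
  refine ⟨?_, hf.isSupportedOnPowers.substInvOfIsUnit _⟩
  simp [hf.1]

end IsAdditiveSeries

variable (A)

/-- Over an `𝔽_2`-algebra `A`, the set of power series `a(T) = T + ∑_{i≥1} a_i T^{2^i}`
is a group under composition: it contains the identity `T`, is closed under
composition, and every element has a compositional inverse of the same form. -/
theorem additive_series_group_under_composition [CharP A 2] :
    IsAdditiveSeries A PowerSeries.X ∧
    (∀ f g : PowerSeries A, IsAdditiveSeries A f → IsAdditiveSeries A g →
      IsAdditiveSeries A (psComp A f g)) ∧
    (∀ f g h : PowerSeries A, IsAdditiveSeries A f → IsAdditiveSeries A g →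
      IsAdditiveSeries A h → psComp A (psComp A f g) h = psComp A f (psComp A g h)) ∧
    (∀ f : PowerSeries A, IsAdditiveSeries A f →
      ∃ g : PowerSeries A, IsAdditiveSeries A g ∧
        psComp A f g = PowerSeries.X ∧ psComp A g f = PowerSeries.X) :=
  ⟨isAdditiveSeries_X, fun _ _ hf hg => hf.comp hg,
    fun f _ _ _ hg hh => psComp_assoc f hg.constantCoeff_eq_zero hh.constantCoeff_eq_zero,
    fun _ hf => ⟨_, hf.substInvOfIsUnit, psComp_substInvOfIsUnit hf.constantCoeff_eq_zero _,
      substInvOfIsUnit_psComp hf.constantCoeff_eq_zero _⟩⟩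

end
end

section
/- For a finite Galois field extension E/F with Galois group G, there is an E-algebra isomorphism E ⊗_F E ≅ ∏_{g ∈ G} E, given by x ⊗ y ↦ (x · g(y))_{g ∈ G}. -/
open TensorProduct

/-!
The map `x ⊗ y ↦ (x · g y)_g` is an `E`-algebra map. Its range is an `E`-subspace containing
every vector `(g y)_g`, and these span `E^G` exactly because the automorphisms `g` are linearly
independent over `E` (Dedekind). Both sides have `E`-dimension `[E : F] = |G|`, so the
surjection is an isomorphism.
-/

section

variable (F E : Type*)

noncomputable def galoisTensorHom [CommSemiring F] [CommSemiring E] [Algebra F E] :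
    E ⊗[F] E →ₐ[E] (E ≃ₐ[F] E) → E :=
  Algebra.TensorProduct.lift (Algebra.ofId E _) (AlgHom.pi fun g => g.toAlgHom)
    fun _ _ => .all _ _

@[simp]
theorem galoisTensorHom_tmul [CommSemiring F] [CommSemiring E] [Algebra F E]
    (x y : E) (g : E ≃ₐ[F] E) : galoisTensorHom F E (x ⊗ₜ y) g = x * g y := by
  simp [galoisTensorHom]

variable [Field F] [Field E] [Algebra F E]

theorem linearIndependent_algEquiv_coeFn :
    LinearIndependent E (fun g : E ≃ₐ[F] E => (g : E → E)) :=
  (linearIndependent_monoidHom E E).comp (fun g : E ≃ₐ[F] E => (g : E →* E))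
    fun _ _ h => AlgEquiv.ext (DFunLike.congr_fun h ·)

theorem galoisTensorHom_surjective [Finite (E ≃ₐ[F] E)] :
    Function.Surjective (galoisTensorHom F E) := by
  have hspan : Submodule.span E (Set.range (flip fun g : E ≃ₐ[F] E => (g : E → E))) = ⊤ :=
    span_flip_eq_top_iff_linearIndependent.mpr (linearIndependent_algEquiv_coeFn F E)
  have hrange : Set.range (flip fun g : E ≃ₐ[F] E => (g : E → E)) ⊆
      LinearMap.range (galoisTensorHom F E).toLinearMap := by
    rintro _ ⟨y, rfl⟩
    exact ⟨1 ⊗ₜ y, funext fun g => by simp [flip]⟩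
  rw [← AlgHom.coe_toLinearMap, ← LinearMap.range_eq_top, eq_top_iff, ← hspan]
  exact Submodule.span_le.mpr hrange

theorem galoisTensorHom_bijective [FiniteDimensional F E] [IsGalois F E] :
    Function.Bijective (galoisTensorHom F E) := by
  have hdim : Module.finrank E (E ⊗[F] E) = Module.finrank E ((E ≃ₐ[F] E) → E) := by
    rw [Module.finrank_baseChange, Module.finrank_pi, ← Nat.card_eq_fintype_card,
      IsGalois.card_aut_eq_finrank]
  have hsurj := galoisTensorHom_surjective F E
  exact ⟨(LinearMap.injective_iff_surjective_of_finrank_eq_finrank hdim).mpr hsurj, hsurj⟩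

end

/-- For a finite Galois extension `E/F` with Galois group `G = Gal(E/F)`, there is an
`E`-algebra isomorphism `E ⊗_F E ≅ ∏_{g ∈ G} E` given by `x ⊗ y ↦ (x · g(y))_g`,
where `E ⊗_F E` is an `E`-algebra via the left factor. -/
theorem galois_tensor_product_iso (F E : Type*) [Field F] [Field E] [Algebra F E]
    [FiniteDimensional F E] [IsGalois F E] :
    ∃ φ : (E ⊗[F] E) ≃ₐ[E] ((E ≃ₐ[F] E) → E),
      ∀ (x y : E) (g : E ≃ₐ[F] E), φ (x ⊗ₜ[F] y) g = x * g y :=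
  ⟨AlgEquiv.ofBijective _ (galoisTensorHom_bijective F E), galoisTensorHom_tmul F E⟩
end
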